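/- Let J ⊂ K[x_1,...,x_n] be an Artinian almost revlex ideal with Hilbert function H of R/J, and let c_1 = max{c : ΔH(j) > 0 for all 0 ≤ j ≤ c}. Then the number of minimal monomial generators of J divisible by x_n equals H(c_1). -/
import Mathlib


open Finset

/-- Total degree of a monomial (exponent vector). -/
def mdeg {n : ℕ} (α : Fin n →₀ ℕ) : ℕ := α.sum fun _ e => e

/-- A set of exponent vectors is the set of monomials of a monomial ideal. -/
def IsMonIdeal {n : ℕ} (S : Set (Fin n →₀ ℕ)) : Prop :=
  ∀ α ∈ S, ∀ β : Fin n →₀ ℕ, α + β ∈ S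

/-- `α` is a minimal monomial generator of the monomial ideal with monomials `S`. -/
def MinGen {n : ℕ} (S : Set (Fin n →₀ ℕ)) (α : Fin n →₀ ℕ) : Prop :=
  α ∈ S ∧ ∀ β ∈ S, β ≤ α → β = α

/-- Stable monomial ideal (variables ordered `x_1 ≻ ⋯ ≻ x_n`, i.e. index `0` largest). -/
def IsStable {n : ℕ} (S : Set (Fin n →₀ ℕ)) : Prop :=
  ∀ α ∈ S, ∀ m ∈ α.support, (∀ k ∈ α.support, k ≤ m) →
    ∀ i : Fin n, i < m → α - Finsupp.single m 1 + Finsupp.single i 1 ∈ S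

def IsStronglyStable {n : ℕ} (S : Set (Fin n →₀ ℕ)) : Prop :=
  ∀ α ∈ S, ∀ i ∈ α.support, ∀ j : Fin n, j < i →
    α - Finsupp.single i 1 + Finsupp.single j 1 ∈ S

/-- `drlLT α β` : `α` is smaller than `β` in degrevlex with `x_1 ≻ ⋯ ≻ x_n`. -/
def drlLT {n : ℕ} (α β : Fin n →₀ ℕ) : Prop :=
  mdeg α < mdeg β ∨ (mdeg α = mdeg β ∧ ∃ i : Fin n, β i < α i ∧ ∀ j : Fin n, i < j → α j = β j)

def IsAlmostRevLex {n : ℕ} (S : Set (Fin n →₀ ℕ)) : Prop :=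
  IsMonIdeal S ∧ ∀ α, MinGen S α → ∀ β : Fin n →₀ ℕ, mdeg β = mdeg α → drlLT α β → β ∈ S

/-- Combinatorial Hilbert function of `R/J`: number of degree-`t` monomials outside `S`. -/
noncomputable def hilbC {n : ℕ} (S : Set (Fin n →₀ ℕ)) (t : ℕ) : ℕ :=
  {α : Fin n →₀ ℕ | mdeg α = t ∧ α ∉ S}.ncard

/-- `fdiff H s t` is `Δ^s H (t)` with the convention `Δ^s H (0) = 1` for `s ≥ 1`. -/
def fdiff (H : ℕ → ℕ) : ℕ → ℕ → ℤ
  | 0, t => H t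
  | _+1, 0 => 1
  | s+1, t+1 => fdiff H s (t+1) - fdiff H s t

lemma mdeg_eq_sum {n : ℕ} (α : Fin n →₀ ℕ) : mdeg α = ∑ i, α i :=
  Finsupp.sum_fintype _ _ (fun _ => rfl)
lemma mdeg_add {n : ℕ} (α β : Fin n →₀ ℕ) : mdeg (α + β) = mdeg α + mdeg β := by
  simp [mdeg_eq_sum, Finset.sum_add_distrib]
lemma mdeg_single {n : ℕ} (i : Fin n) (c : ℕ) : mdeg (Finsupp.single i c) = c := by
  simp [mdeg_eq_sum, Finsupp.single_apply]
lemma mdeg_eq_zero {n : ℕ} {α : Fin n →₀ ℕ} (h : mdeg α = 0) : α = 0 := by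
  rw [mdeg_eq_sum] at h
  ext i
  exact Finset.sum_eq_zero_iff.mp h i (Finset.mem_univ i)
lemma mdeg_mono {n : ℕ} {α β : Fin n →₀ ℕ} (h : α ≤ β) : mdeg α ≤ mdeg β := by
  rw [mdeg_eq_sum, mdeg_eq_sum]
  exact Finset.sum_le_sum fun i _ => Finsupp.le_def.mp h i
lemma mdeg_strict_mono {n : ℕ} {α β : Fin n →₀ ℕ} (h : α ≤ β) (hne : α ≠ β) :
    mdeg α < mdeg β := by
  rw [mdeg_eq_sum, mdeg_eq_sum]
  obtain ⟨i, hi⟩ : ∃ i, α i ≠ β i := by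
    by_contra hc; push_neg at hc; exact hne (Finsupp.ext hc)
  exact Finset.sum_lt_sum (fun i _ => Finsupp.le_def.mp h i)
    ⟨i, Finset.mem_univ i, lt_of_le_of_ne (Finsupp.le_def.mp h i) hi⟩

lemma mem_of_minGen_le {n : ℕ} {S : Set (Fin n →₀ ℕ)} (hM : IsMonIdeal S)
    {τ α : Fin n →₀ ℕ} (hτ : τ ∈ S) (h : τ ≤ α) : α ∈ S := by
  have := hM τ hτ (α - τ)
  rwa [add_tsub_cancel_of_le h] at this

lemma exists_minGen {n : ℕ} {S : Set (Fin n →₀ ℕ)} {α : Fin n →₀ ℕ} (h : α ∈ S) :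
    ∃ τ, τ ≤ α ∧ MinGen S τ := by
  obtain ⟨d, hd⟩ : ∃ d, mdeg α = d := ⟨_, rfl⟩
  induction d using Nat.strong_induction_on generalizing α with
  | _ d ih =>
    by_cases hmin : ∀ β ∈ S, β ≤ α → β = α
    · exact ⟨α, le_refl α, h, hmin⟩
    · push_neg at hmin
      obtain ⟨β, hβS, hβle, hβne⟩ := hmin
      obtain ⟨τ, hτle, hτ⟩ := ih (mdeg β) (hd ▸ mdeg_strict_mono hβle hβne) hβS rfl
      exact ⟨τ, le_trans hτle hβle, hτ⟩

/-- Claim A: if `β ∉ S` but `β + x_n ∈ S`, then `β + x_n` is a minimal generator. -/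
lemma claimA {n : ℕ} {S : Set (Fin n →₀ ℕ)} (hS : IsAlmostRevLex S)
    {N : Fin n} (hN : ∀ j : Fin n, ¬ N < j)
    {β : Fin n →₀ ℕ} (hβ : β ∉ S) (h : β + Finsupp.single N 1 ∈ S) :
    MinGen S (β + Finsupp.single N 1) := by
  obtain ⟨τ, hle, hmin⟩ := exists_minGen h
  suffices hτ : τ = β + Finsupp.single N 1 by rwa [hτ] at hmin
  by_cases hτN : τ N ≤ β N
  · exfalso
    apply hβ
    apply mem_of_minGen_le hS.1 hmin.1
    rw [Finsupp.le_def]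
    intro i
    by_cases hi : i = N
    · subst hi; exact hτN
    · have := Finsupp.le_def.mp hle i
      simpa [Finsupp.single_apply, hi, Ne.symm hi] using this
  · -- τ N = β N + 1
    have hτN' : τ N = β N + 1 := by
      have := Finsupp.le_def.mp hle N
      simp [Finsupp.single_apply] at this
      omega
    have hsle : Finsupp.single N 1 ≤ τ := by
      rw [Finsupp.le_def]
      intro i
      by_cases hi : i = N
      · subst hi; simp [hτN']
      · simp [Finsupp.single_apply, Ne.symm hi]
    set τ' := τ - Finsupp.single N 1 with hτ'def
    have hτ'add : τ' + Finsupp.single N 1 = τ := by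
      rw [hτ'def, tsub_add_cancel_of_le hsle]
    have hτ'N : τ' N = β N := by
      rw [hτ'def, Finsupp.tsub_apply]; simp [hτN']
    have hτ'le : τ' ≤ β := by
      rw [Finsupp.le_def]
      intro i
      by_cases hi : i = N
      · subst hi; rw [hτ'N]
      · rw [hτ'def, Finsupp.tsub_apply]
        have := Finsupp.le_def.mp hle i
        simpa [Finsupp.single_apply, Ne.symm hi] using this
    set γ := β - τ' with hγdef
    have hγadd : τ' + γ = β := add_tsub_cancel_of_le hτ'le
    have hγN : γ N = 0 := by rw [hγdef, Finsupp.tsub_apply, hτ'N]; omega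
    by_cases hγ0 : γ = 0
    · rw [hγ0, add_zero] at hγadd
      rw [← hγadd, hτ'add]
    · exfalso
      obtain ⟨m, hm⟩ : ∃ m, γ m ≠ 0 := by
        by_contra hc; push_neg at hc; exact hγ0 (Finsupp.ext fun i => hc i)
      have hmN : m ≠ N := fun he => hm (he ▸ hγN)
      set σ := τ' + Finsupp.single m 1 with hσdef
      have hσS : σ ∈ S := by
        apply hS.2 τ hmin (σ) _ _
        · rw [hσdef, ← hτ'add, mdeg_add, mdeg_add, mdeg_single, mdeg_single]
        · right
          constructor
          · rw [hσdef, ← hτ'add, mdeg_add, mdeg_add, mdeg_single, mdeg_single]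
          · refine ⟨N, ?_, fun j hj => absurd hj (hN j)⟩
            rw [hσdef, hτN']
            simp [Finsupp.single_apply, hτ'N]
            exact hmN
      apply hβ
      have hsm : Finsupp.single m 1 ≤ γ := by
        rw [Finsupp.le_def]
        intro i
        by_cases hi : i = m
        · subst hi; simp; omega
        · simp [Finsupp.single_apply, Ne.symm hi]
      have : σ + (γ - Finsupp.single m 1) = β := by
        rw [hσdef, add_assoc, add_tsub_cancel_of_le hsm, hγadd]
      rw [← this]
      exact hS.1 σ hσS _

/-- the sets of minimal generators divisible by x_n, in degree t -/
def Gt {n : ℕ} (S : Set (Fin n →₀ ℕ)) (N : Fin n) (t : ℕ) : Set (Fin n →₀ ℕ) :=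
  {α | MinGen S α ∧ α N ≠ 0 ∧ mdeg α = t}
/-- standard monomials of degree t with no x_n -/
def Zt {n : ℕ} (S : Set (Fin n →₀ ℕ)) (N : Fin n) (t : ℕ) : Set (Fin n →₀ ℕ) :=
  {α | mdeg α = t ∧ α ∉ S ∧ α N = 0}

lemma single_le_of_pos {n : ℕ} {α : Fin n →₀ ℕ} {N : Fin n} (h : α N ≠ 0) :
    Finsupp.single N 1 ≤ α := by
  rw [Finsupp.le_def]
  intro i
  by_cases hi : i = N
  · subst hi; simp; omega
  · simp [Finsupp.single_apply, Ne.symm hi]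

lemma key_identity {n : ℕ} {S : Set (Fin n →₀ ℕ)} (hS : IsAlmostRevLex S)
    {N : Fin n} (hN : ∀ j : Fin n, ¬ N < j)
    (hArt : {α : Fin n →₀ ℕ | α ∉ S}.Finite) (t : ℕ) :
    hilbC S t + (Zt S N (t+1)).ncard = hilbC S (t+1) + (Gt S N (t+1)).ncard := by
  classical
  set e : Fin n →₀ ℕ := Finsupp.single N 1 with he
  have heN : e N = 1 := by simp [he]
  have hinj : Function.Injective (fun β : Fin n →₀ ℕ => β + e) :=
    fun a b hab => by simpa using add_left_injective e hab
  set D : Set (Fin n →₀ ℕ) := {β | (mdeg β = t ∧ β ∉ S) ∧ β + e ∈ S} with hD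
  set E : Set (Fin n →₀ ℕ) := {β | (mdeg β = t ∧ β ∉ S) ∧ β + e ∉ S} with hE
  set E' : Set (Fin n →₀ ℕ) := {α | (mdeg α = t+1 ∧ α ∉ S) ∧ α N ≠ 0} with hE'
  have hsub : ∀ (P : (Fin n →₀ ℕ) → Prop),
      {β | (mdeg β = t ∧ β ∉ S) ∧ P β}.Finite :=
    fun P => hArt.subset (fun β hβ => hβ.1.2)
  have hsub' : ∀ (P : (Fin n →₀ ℕ) → Prop),
      {β | (mdeg β = t+1 ∧ β ∉ S) ∧ P β}.Finite :=
    fun P => hArt.subset (fun β hβ => hβ.1.2)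
  have hZfin : (Zt S N (t+1)).Finite := hArt.subset (fun β hβ => hβ.2.1)
  -- split of Ct t
  have hsplit1 : {α : Fin n →₀ ℕ | mdeg α = t ∧ α ∉ S} = D ∪ E := by
    ext α; simp only [hD, hE, Set.mem_setOf_eq, Set.mem_union]; tauto
  have hdisj1 : Disjoint D E := by
    rw [Set.disjoint_left]; intro a ha hb; exact hb.2 ha.2
  -- split of Ct (t+1)
  have hsplit2 : {α : Fin n →₀ ℕ | mdeg α = t+1 ∧ α ∉ S} = E' ∪ Zt S N (t+1) := by
    ext α
    simp only [hE', Zt, Set.mem_setOf_eq, Set.mem_union]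
    tauto
  have hdisj2 : Disjoint E' (Zt S N (t+1)) := by
    rw [Set.disjoint_left]; intro a ha hb; exact ha.2 hb.2.2
  -- image of D is Gt (t+1)
  have himD : (fun β => β + e) '' D = Gt S N (t+1) := by
    ext α
    constructor
    · rintro ⟨β, ⟨⟨hdeg, hβS⟩, hβe⟩, rfl⟩
      refine ⟨claimA hS hN hβS hβe, ?_, ?_⟩
      · simp [heN]
      · rw [mdeg_add, hdeg, he, mdeg_single]
    · rintro ⟨hmin, hαN, hdeg⟩
      have hle : e ≤ α := single_le_of_pos hαN
      refine ⟨α - e, ⟨⟨?_, ?_⟩, ?_⟩, ?_⟩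
      · have h1 : mdeg (α - e + e) = t + 1 := by rw [tsub_add_cancel_of_le hle, hdeg]
        have h2 : mdeg e = 1 := by rw [he]; exact mdeg_single N 1
        rw [mdeg_add] at h1
        omega
      · intro hc
        have := hmin.2 _ hc (tsub_le_self)
        have hne : α - e ≠ α := by
          intro hcc
          have := DFunLike.congr_fun hcc N
          simp [Finsupp.tsub_apply, heN] at this
          omega
        exact hne this
      · simpa [tsub_add_cancel_of_le hle] using hmin.1
      · simp [tsub_add_cancel_of_le hle]
    -- image of E is E'
  have himE : (fun β => β + e) '' E = E' := by
    ext α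
    constructor
    · rintro ⟨β, ⟨⟨hdeg, hβS⟩, hβe⟩, rfl⟩
      refine ⟨⟨?_, hβe⟩, ?_⟩
      · rw [mdeg_add, hdeg, he, mdeg_single]
      · simp [heN]
    · rintro ⟨⟨hdeg, hαS⟩, hαN⟩
      have hle : e ≤ α := single_le_of_pos hαN
      refine ⟨α - e, ⟨⟨?_, ?_⟩, ?_⟩, ?_⟩
      · have h1 : mdeg (α - e + e) = t + 1 := by rw [tsub_add_cancel_of_le hle, hdeg]
        have h2 : mdeg e = 1 := by rw [he]; exact mdeg_single N 1
        rw [mdeg_add] at h1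
        omega
      · intro hc
        exact hαS (by simpa [tsub_add_cancel_of_le hle] using hS.1 _ hc e)
      · simpa [tsub_add_cancel_of_le hle] using hαS
      · simp [tsub_add_cancel_of_le hle]
  have hgD : (Gt S N (t+1)).ncard = D.ncard := by
    rw [← himD, Set.ncard_image_of_injective _ hinj]
  have hgE : E'.ncard = E.ncard := by
    rw [← himE, Set.ncard_image_of_injective _ hinj]
  have h1 : hilbC S t = D.ncard + E.ncard := by
    rw [hilbC, hsplit1, Set.ncard_union_eq hdisj1 (hsub _) (hsub _)]
  have h2 : hilbC S (t+1) = E'.ncard + (Zt S N (t+1)).ncard := by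
    rw [hilbC, hsplit2, Set.ncard_union_eq hdisj2 (hsub' _) hZfin]
  omega

lemma claimC {n : ℕ} {S : Set (Fin n →₀ ℕ)} (hS : IsAlmostRevLex S)
    {N : Fin n} (hN : ∀ j : Fin n, ¬ N < j) {t : ℕ}
    (hG : (Gt S N t).Nonempty) (hZ : (Zt S N t).Nonempty) : False := by
  obtain ⟨τ, hτmin, hτN, hτdeg⟩ := hG
  obtain ⟨α, hαdeg, hαS, hαN⟩ := hZ
  apply hαS
  apply hS.2 τ hτmin α (by rw [hαdeg, hτdeg])
  right
  refine ⟨by rw [hαdeg, hτdeg], N, by omega, fun j hj => absurd hj (hN j)⟩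

lemma claimD {n : ℕ} {S : Set (Fin n →₀ ℕ)} (hS : IsAlmostRevLex S)
    {N : Fin n} {t : ℕ} (h : (Zt S N (t+1)).Nonempty) : (Zt S N t).Nonempty := by
  obtain ⟨α, hαdeg, hαS, hαN⟩ := h
  have hα0 : α ≠ 0 := by
    intro hc
    rw [hc] at hαdeg
    simp [mdeg, Finsupp.sum_zero_index] at hαdeg
  obtain ⟨i, hi⟩ := Finsupp.support_nonempty_iff.mpr hα0
  have hiα : α i ≠ 0 := Finsupp.mem_support_iff.mp hi
  have hle : Finsupp.single i 1 ≤ α := single_le_of_pos hiα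
  have hiN : i ≠ N := fun hc => hiα (hc ▸ hαN)
  refine ⟨α - Finsupp.single i 1, ?_, ?_, ?_⟩
  · have h1 : mdeg (α - Finsupp.single i 1 + Finsupp.single i 1) = t + 1 := by
      rw [tsub_add_cancel_of_le hle, hαdeg]
    rw [mdeg_add, mdeg_single] at h1
    omega
  · intro hc
    exact hαS (by simpa [tsub_add_cancel_of_le hle] using hS.1 _ hc (Finsupp.single i 1))
  · rw [Finsupp.tsub_apply, Finsupp.single_apply]
    simp [Ne.symm hiN, hαN]

/-- Part 1: the bijection between min gens divisible by x_n and
standard monomials without x_n. -/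
lemma part1 {n : ℕ} {S : Set (Fin n →₀ ℕ)} (hS : IsAlmostRevLex S)
    {N : Fin n} (hN : ∀ j : Fin n, ¬ N < j)
    (hArt : {α : Fin n →₀ ℕ | α ∉ S}.Finite) :
    {α : Fin n →₀ ℕ | MinGen S α ∧ α N ≠ 0}.ncard
      = {α : Fin n →₀ ℕ | α ∉ S ∧ α N = 0}.ncard := by
  classical
  set M : Set (Fin n →₀ ℕ) := {α | MinGen S α ∧ α N ≠ 0} with hM
  set T : Set (Fin n →₀ ℕ) := {α | α ∉ S ∧ α N = 0} with hT
  have hmapsto : ∀ τ ∈ M, Finsupp.erase N τ ∈ T := by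
    rintro τ ⟨hmin, hτN⟩
    refine ⟨?_, Finsupp.erase_same⟩
    intro hc
    have hρS : Finsupp.erase N τ + Finsupp.single N (τ N - 1) ∈ S := hS.1 _ hc _
    have hρle : Finsupp.erase N τ + Finsupp.single N (τ N - 1) ≤ τ := by
      rw [Finsupp.le_def]
      intro i
      by_cases hi : i = N
      · subst hi; simp [Finsupp.erase_same]
      · simp [Finsupp.erase_ne hi, Finsupp.single_apply, Ne.symm hi]
    have := hmin.2 _ hρS hρle
    have := DFunLike.congr_fun this N
    simp [Finsupp.erase_same] at this
    omega
  have hinj : Set.InjOn (Finsupp.erase N) M := by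
    rintro τ ⟨hmin, _⟩ τ' ⟨hmin', _⟩ h
    have key : ∀ σ σ' : Fin n →₀ ℕ, MinGen S σ → MinGen S σ' →
        Finsupp.erase N σ = Finsupp.erase N σ' → σ N ≤ σ' N → σ = σ' := by
      intro σ σ' hm hm' he hle
      refine (hm'.2 σ hm.1 ?_).symm ▸ rfl
      rw [Finsupp.le_def]
      intro i
      by_cases hi : i = N
      · subst hi; exact hle
      · have := DFunLike.congr_fun he i
        simp [Finsupp.erase_ne hi] at this
        omega
    rcases le_total (τ N) (τ' N) with hle | hle
    · exact key τ τ' hmin hmin' h hle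
    · exact (key τ' τ hmin' hmin h.symm hle).symm
  have hsurj : Set.SurjOn (Finsupp.erase N) M T := by
    rintro α ⟨hαS, hαN⟩
    have hex : ∃ c, α + Finsupp.single N c ∈ S := by
      by_contra hno
      push_neg at hno
      have hinjc : Function.Injective (fun c : ℕ => α + Finsupp.single N c) := by
        intro c c' hcc
        have := DFunLike.congr_fun hcc N
        simpa [hαN] using this
      exact hArt.not_infinite (Set.infinite_of_injective_forall_mem hinjc hno)
    set c := Nat.find hex with hcdef
    have hcS : α + Finsupp.single N c ∈ S := Nat.find_spec hex
    have hcpos : c ≠ 0 := by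
      intro hc0
      rw [hc0] at hcS
      simp at hcS
      exact hαS hcS
    have hβ : α + Finsupp.single N (c-1) ∉ S := Nat.find_min hex (by omega)
    have hτeq : α + Finsupp.single N (c-1) + Finsupp.single N 1 = α + Finsupp.single N c := by
      rw [add_assoc, ← Finsupp.single_add]
      congr 2
      omega
    have hmin : MinGen S (α + Finsupp.single N c) := by
      rw [← hτeq]
      exact claimA hS hN hβ (hτeq ▸ hcS)
    refine ⟨α + Finsupp.single N c, ⟨hmin, by simp [hαN]; omega⟩, ?_⟩
    rw [Finsupp.erase_add, Finsupp.erase_single, add_zero]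
    ext i
    by_cases hi : i = N
    · subst hi; simp [Finsupp.erase_same, hαN]
    · simp [Finsupp.erase_ne hi]
  have hbij : Set.BijOn (Finsupp.erase N) M T := ⟨hmapsto, hinj, hsurj⟩
  rw [← hbij.image_eq, Set.ncard_image_of_injOn hinj]

/-- For an Artinian almost revlex ideal `J ⊂ K[x_1,…,x_n]` with Hilbert function `H` and
`c_1 = max{c : ΔH(j) > 0 for all 0 ≤ j ≤ c}`, the number of minimal generators of `J`
divisible by the last variable `x_n` equals `H(c_1)`. -/
theorem card_minGen_divisible_eq_H_c1 {n : ℕ} (hn : 1 ≤ n)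
    (S : Set (Fin n →₀ ℕ)) (hS : IsAlmostRevLex S)
    (hArt : {α : Fin n →₀ ℕ | α ∉ S}.Finite)
    (c1 : ℕ)
    (hc1 : (∀ j ≤ c1, 0 < fdiff (hilbC S) 1 j) ∧ fdiff (hilbC S) 1 (c1 + 1) ≤ 0) :
    {α : Fin n →₀ ℕ | MinGen S α ∧ α ⟨n - 1, by omega⟩ ≠ 0}.ncard = hilbC S c1 := by
  classical
  set N : Fin n := ⟨n - 1, by omega⟩ with hNdef
  have hN : ∀ j : Fin n, ¬ N < j := by
    intro j hj
    rw [Fin.lt_def] at hj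
    have := j.2
    simp [hNdef] at hj
    omega
  have hfd : ∀ t, fdiff (hilbC S) 1 (t+1) = (hilbC S (t+1) : ℤ) - hilbC S t := fun t => rfl
  -- increasing part
  have hinc : ∀ t, t + 1 ≤ c1 → hilbC S t < hilbC S (t+1) := by
    intro t ht
    have := hc1.1 (t+1) ht
    rw [hfd t] at this
    omega
  have hdec : hilbC S (c1+1) ≤ hilbC S c1 := by
    have := hc1.2
    rw [hfd c1] at this
    omega
  have hZfin : ∀ t, (Zt S N t).Finite := fun t => hArt.subset (fun β hβ => hβ.2.1)
  -- step1 : in the strictly increasing range, no generators divisible by x_n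
  have step1 : ∀ t, t + 1 ≤ c1 →
      hilbC S (t+1) = hilbC S t + (Zt S N (t+1)).ncard := by
    intro t ht
    have hid := key_identity hS hN hArt t
    have hlt := hinc t ht
    have hzpos : (Zt S N (t+1)).ncard ≠ 0 := by omega
    have hGempty : (Gt S N (t+1)).ncard = 0 := by
      by_contra hg
      exact claimC hS hN (Set.nonempty_of_ncard_ne_zero hg)
        (Set.nonempty_of_ncard_ne_zero hzpos)
    omega
  -- step2 : Zt vanishes at c1 + 1
  have step2 : Zt S N (c1+1) = ∅ := by
    by_contra hne
    have hZne : (Zt S N (c1+1)).Nonempty := Set.nonempty_iff_ne_empty.mpr hne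
    have hzpos : 0 < (Zt S N (c1+1)).ncard := (Set.ncard_pos (hZfin _)).mpr hZne
    have hid := key_identity hS hN hArt c1
    have hgpos : (Gt S N (c1+1)).ncard ≠ 0 := by omega
    exact claimC hS hN (Set.nonempty_of_ncard_ne_zero hgpos) hZne
  -- step3 : Zt vanishes above c1
  have step3 : ∀ t, c1 + 1 ≤ t → Zt S N t = ∅ := by
    intro t ht
    induction t with
    | zero => omega
    | succ t ih =>
      rcases Nat.lt_or_ge (c1 + 1) (t + 1) with h | h
      · by_contra hne
        have := claimD hS (Set.nonempty_iff_ne_empty.mpr hne)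
        rw [ih (by omega)] at this
        exact Set.not_nonempty_empty this
      · have : t + 1 = c1 + 1 := by omega
        rw [this]; exact step2
  -- the truncated union
  set Tle : ℕ → Set (Fin n →₀ ℕ) :=
    fun c => {α | α ∉ S ∧ α N = 0 ∧ mdeg α ≤ c} with hTle
  have hTlefin : ∀ c, (Tle c).Finite := fun c => hArt.subset (fun β hβ => hβ.1)
  have hTle0 : Tle 0 = {α : Fin n →₀ ℕ | mdeg α = 0 ∧ α ∉ S} := by
    ext α
    simp only [hTle, Set.mem_setOf_eq]
    constructor
    · rintro ⟨h1, h2, h3⟩; exact ⟨Nat.le_zero.mp h3, h1⟩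
    · rintro ⟨h1, h2⟩
      refine ⟨h2, ?_, h1.le⟩
      rw [mdeg_eq_zero h1]; rfl
  have hTlesucc : ∀ c, Tle (c+1) = Tle c ∪ Zt S N (c+1) := by
    intro c
    ext α
    simp only [hTle, Zt, Set.mem_setOf_eq, Set.mem_union]
    constructor
    · rintro ⟨h1, h2, h3⟩
      rcases Nat.lt_or_ge (mdeg α) (c+1) with h | h
      · exact Or.inl ⟨h1, h2, by omega⟩
      · exact Or.inr ⟨by omega, h1, h2⟩
    · rintro (⟨h1, h2, h3⟩ | ⟨h1, h2, h3⟩)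
      · exact ⟨h1, h2, by omega⟩
      · exact ⟨h2, h3, by omega⟩
  have hTledisj : ∀ c, Disjoint (Tle c) (Zt S N (c+1)) := by
    intro c
    rw [Set.disjoint_left]
    rintro α ⟨h1, h2, h3⟩ ⟨h4, h5, h6⟩
    omega
  -- cardinality of Tle c equals hilbC S c for c ≤ c1
  have hcard : ∀ c, c ≤ c1 → (Tle c).ncard = hilbC S c := by
    intro c
    induction c with
    | zero => intro _; rw [hTle0]; rfl
    | succ c ih =>
      intro hc
      rw [hTlesucc c, Set.ncard_union_eq (hTledisj c) (hTlefin c) (hZfin _),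
        ih (by omega), step1 c hc]
  -- T = Tle c1
  have hTeq : {α : Fin n →₀ ℕ | α ∉ S ∧ α N = 0} = Tle c1 := by
    ext α
    simp only [hTle, Set.mem_setOf_eq]
    constructor
    · rintro ⟨h1, h2⟩
      refine ⟨h1, h2, ?_⟩
      by_contra hgt
      have : α ∈ Zt S N (mdeg α) := ⟨rfl, h1, h2⟩
      rw [step3 (mdeg α) (by omega)] at this
      exact this
    · rintro ⟨h1, h2, _⟩; exact ⟨h1, h2⟩
  calc {α : Fin n →₀ ℕ | MinGen S α ∧ α ⟨n - 1, by omega⟩ ≠ 0}.ncard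
      = {α : Fin n →₀ ℕ | α ∉ S ∧ α N = 0}.ncard := part1 hS hN hArt
    _ = (Tle c1).ncard := by rw [hTeq]
    _ = hilbC S c1 := hcard c1 le_rfl
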